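/- arXiv:1205.1730 — 3 statements merged into one kernel-verified Lean document; each statement's English description precedes it below -/
import Mathlib

section
/- Let L be the linear functional on ℚ[x] with L(x^n) = |E_n| (the absolute values of the Euler numbers), and define s_m(x) by s_0 = 1, s_1 = x, s_{m+1} = x·s_m − m²·s_{m−1}. Then for all m ≠ k, L(s_m · s_k) = 0; that is, the s_m form an orthogonal polynomial sequence for the moment sequence |E_n|. -/
/-- The Euler numbers `E_n`, defined as `n!` times the `n`-th Taylor coefficient at `0`
of `sech z = 1 / cosh z`. -/
noncomputable def eulerNumber (n : ℕ) : ℝ :=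
  iteratedDeriv n (fun x : ℝ => (Real.cosh x)⁻¹) 0

/-- The polynomial sequence `s_m ∈ ℚ[x]` defined by `s_0 = 1`, `s_1 = x`,
`s_{m+1} = x·s_m − m²·s_{m−1}`. -/
noncomputable def sPoly : ℕ → Polynomial ℚ
  | 0 => 1
  | 1 => Polynomial.X
  | (m + 2) => Polynomial.X * sPoly (m + 1) - Polynomial.C ((m + 1 : ℚ) ^ 2) * sPoly m

/-- The moment functional `L : ℚ[x] → ℝ` with `L(x^n) = |E_n|`. -/
noncomputable def momentL (p : Polynomial ℚ) : ℝ :=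
  p.sum fun n c => (c : ℝ) * |eulerNumber n|


/-!
Writing the `n`-th derivative of `sech` as `∑ₖ c(n,k) · sech · tanh ^ k`, the coefficients obey
`c(n+1,k) = (k+1) c(n,k+1) - k c(n,k-1)`, and `c(n,k) = I ^ (n+k) · w(n,k)` where `w(n,k) ≥ 0` is a
weighted count of lattice paths from height `0` to height `k`; hence `|E_n| = w(n,0)`.
The recurrence `s_{m+2} = x s_{m+1} - (m+1)² s_m` is the last-step recurrence of these paths, so
`L(x^j s_m) = m! · w(j,m)`, which vanishes for `j < m`: a path of length `j` cannot reach height `m`.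
Since `deg s_k ≤ k`, this gives `L(s_m s_k) = 0` for `k < m`.
-/

open Polynomial
open scoped Nat

/-- Weighted lattice paths of length `n` on `ℕ` from height `0` to height `k`, a step between
heights `j` and `j + 1` (in either direction) carrying weight `j + 1`. -/
def pathWeight : ℕ → ℕ → ℕ
  | 0, 0 => 1
  | 0, _ + 1 => 0
  | n + 1, k => (k + 1) * pathWeight n (k + 1) + k * pathWeight n (k - 1)

/-- The coefficients of the `n`-th derivative of `sech` in the basis `sech · tanh ^ k`. -/
def sechDerivCoeff : ℕ → ℕ → ℤ
  | 0, 0 => 1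
  | 0, _ + 1 => 0
  | n + 1, k => (k + 1) * sechDerivCoeff n (k + 1) - k * sechDerivCoeff n (k - 1)

lemma pathWeight_succ (n k : ℕ) :
    pathWeight (n + 1) k = (k + 1) * pathWeight n (k + 1) + k * pathWeight n (k - 1) := by
  rw [pathWeight]

lemma sechDerivCoeff_succ (n k : ℕ) :
    sechDerivCoeff (n + 1) k
      = (k + 1) * sechDerivCoeff n (k + 1) - k * sechDerivCoeff n (k - 1) := by
  rw [sechDerivCoeff]

lemma pathWeight_eq_zero_of_lt {n k : ℕ} (h : n < k) : pathWeight n k = 0 := by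
  induction n generalizing k with
  | zero => obtain ⟨k, rfl⟩ := Nat.exists_eq_add_of_lt h; rfl
  | succ n ih =>
    rw [pathWeight_succ, ih (by omega), ih (by omega)]
    rfl

/-- The two recurrences agree because `I ^ (n + k - 1) = -I ^ (n + k + 1)`. -/
lemma sechDerivCoeff_eq_I_pow_mul_pathWeight (n k : ℕ) :
    (sechDerivCoeff n k : ℂ) = Complex.I ^ (n + k) * pathWeight n k := by
  induction n generalizing k with
  | zero => cases k <;> simp [sechDerivCoeff, pathWeight]
  | succ n ih =>
    rw [sechDerivCoeff_succ, pathWeight_succ]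
    cases k with
    | zero => push_cast; rw [ih]; ring
    | succ k =>
      push_cast
      rw [ih, ih]
      have hI : Complex.I ^ (n + k) = -Complex.I ^ (n + 1 + (k + 1)) := by
        rw [show n + 1 + (k + 1) = n + k + 2 by omega, pow_add _ (n + k), Complex.I_sq]
        ring
      rw [hI]
      ring

lemma abs_sechDerivCoeff (n k : ℕ) : |sechDerivCoeff n k| = pathWeight n k := by
  have h := congrArg (‖·‖) (sechDerivCoeff_eq_I_pow_mul_pathWeight n k)
  simp only [norm_mul, norm_pow, Complex.norm_I, one_pow, one_mul, Complex.norm_intCast,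
    Complex.norm_natCast] at h
  exact_mod_cast h

lemma sechDerivCoeff_eq_zero_of_lt {n k : ℕ} (h : n < k) : sechDerivCoeff n k = 0 :=
  abs_eq_zero.mp (by rw [abs_sechDerivCoeff, pathWeight_eq_zero_of_lt h]; rfl)

/-- `sech x · tanh x ^ k`. -/
noncomputable def sechTanhPow (k : ℕ) (x : ℝ) : ℝ := Real.sinh x ^ k * (Real.cosh x)⁻¹ ^ (k + 1)

lemma hasDerivAt_sechTanhPow (k : ℕ) (x : ℝ) :
    HasDerivAt (sechTanhPow k)
      (k * sechTanhPow (k - 1) x - (k + 1) * sechTanhPow (k + 1) x) x := by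
  have hc : Real.cosh x ≠ 0 := (Real.cosh_pos x).ne'
  have h := ((Real.hasDerivAt_sinh x).fun_pow k).mul
    (((Real.hasDerivAt_cosh x).fun_inv hc).fun_pow (k + 1))
  refine h.congr_deriv ?_
  unfold sechTanhPow
  cases k with
  | zero =>
    simp only [CharP.cast_eq_zero, zero_tsub, pow_zero, mul_one, zero_mul, zero_add, pow_one,
      Nat.cast_one, tsub_self, one_mul, Nat.reduceAdd, inv_pow, zero_sub]
    field_simp
  | succ k =>
    simp only [Nat.add_sub_cancel, inv_pow]
    push_cast
    field_simp
    ring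

lemma sum_sechDerivCoeff_mul_deriv (n : ℕ) (G : ℕ → ℝ) :
    ∑ k ∈ Finset.range (n + 1), (sechDerivCoeff n k : ℝ) * (k * G (k - 1) - (k + 1) * G (k + 1))
      = ∑ k ∈ Finset.range (n + 2), (sechDerivCoeff (n + 1) k : ℝ) * G k := by
  have hdown : ∑ k ∈ Finset.range (n + 1), (sechDerivCoeff n k : ℝ) * (k * G (k - 1))
      = ∑ k ∈ Finset.range (n + 2), (k + 1) * (sechDerivCoeff n (k + 1) : ℝ) * G k := by
    rw [Finset.sum_range_succ', Finset.sum_range_succ _ (n + 1), Finset.sum_range_succ _ n,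
      sechDerivCoeff_eq_zero_of_lt (by omega : n < n + 1 + 1),
      sechDerivCoeff_eq_zero_of_lt (by omega : n < n + 1)]
    simp only [Int.cast_zero, mul_zero, zero_mul, add_zero, CharP.cast_eq_zero, Nat.cast_add,
      Nat.cast_one, Nat.add_sub_cancel]
    exact Finset.sum_congr rfl fun k _ => by ring
  have hup : ∑ k ∈ Finset.range (n + 1), (sechDerivCoeff n k : ℝ) * ((k + 1) * G (k + 1))
      = ∑ k ∈ Finset.range (n + 2), k * (sechDerivCoeff n (k - 1) : ℝ) * G k := by
    rw [Finset.sum_range_succ' _ (n + 1)]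
    simp only [CharP.cast_eq_zero, zero_mul, add_zero, Nat.cast_add, Nat.cast_one,
      Nat.add_sub_cancel]
    exact Finset.sum_congr rfl fun k _ => by ring
  rw [Finset.sum_congr rfl fun k _ => mul_sub _ _ _, Finset.sum_sub_distrib, hdown, hup,
    ← Finset.sum_sub_distrib]
  refine Finset.sum_congr rfl fun k _ => ?_
  rw [sechDerivCoeff_succ]
  push_cast
  ring

lemma iteratedDeriv_inv_cosh (n : ℕ) :
    iteratedDeriv n (fun x => (Real.cosh x)⁻¹)
      = fun x => ∑ k ∈ Finset.range (n + 1), (sechDerivCoeff n k : ℝ) * sechTanhPow k x := by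
  induction n with
  | zero => funext x; simp [sechTanhPow, sechDerivCoeff]
  | succ n ih =>
    funext x
    rw [iteratedDeriv_succ, ih, ← sum_sechDerivCoeff_mul_deriv]
    exact (HasDerivAt.fun_sum fun k _ =>
      (hasDerivAt_sechTanhPow k x).const_mul (sechDerivCoeff n k : ℝ)).deriv

lemma eulerNumber_eq_sechDerivCoeff (n : ℕ) : eulerNumber n = sechDerivCoeff n 0 := by
  rw [eulerNumber, iteratedDeriv_inv_cosh]
  dsimp only
  rw [Finset.sum_eq_single_of_mem 0 (by simp)]
  · simp [sechTanhPow]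
  · intro k _ hk
    simp [sechTanhPow, zero_pow hk]

lemma abs_eulerNumber (n : ℕ) : |eulerNumber n| = pathWeight n 0 := by
  rw [eulerNumber_eq_sechDerivCoeff, ← Int.cast_abs, abs_sechDerivCoeff]
  rfl

lemma momentL_eq_lsum :
    momentL = Polynomial.lsum fun n => LinearMap.toSpanSingleton ℚ ℝ |eulerNumber n| := by
  funext p
  simp [momentL, Polynomial.lsum_apply, Rat.smul_def]

lemma momentL_X_pow (n : ℕ) : momentL (X ^ n) = pathWeight n 0 := by
  rw [momentL, ← monomial_one_right_eq_X_pow, sum_monomial_index _ _ (by simp),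
    abs_eulerNumber, Rat.cast_one, one_mul]

lemma natDegree_sPoly_le (m : ℕ) : (sPoly m).natDegree ≤ m := by
  induction m using sPoly.induct with
  | case1 => simp [sPoly]
  | case2 => simp [sPoly]
  | case3 m ih₁ ih₀ =>
    rw [sPoly]
    refine (natDegree_sub_le _ _).trans (max_le ?_ ?_)
    · exact natDegree_mul_le.trans (by rw [natDegree_X]; omega)
    · exact (natDegree_C_mul_le _ _).trans (by omega)

section PathMoments

variable (L : ℚ[X] →ₗ[ℚ] ℝ) (hL : ∀ n, L (X ^ n) = pathWeight n 0)
include hL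

/-- The three-term recurrence of `sPoly` matches the last-step recurrence of `pathWeight`. -/
lemma map_X_pow_mul_sPoly (m j : ℕ) : L (X ^ j * sPoly m) = m ! * pathWeight j m := by
  induction m using sPoly.induct generalizing j with
  | case1 => simp [sPoly, hL]
  | case2 => simp [sPoly, ← pow_succ, hL, pathWeight_succ]
  | case3 m ih₁ ih₀ =>
    have hrec : X ^ j * sPoly (m + 2)
        = X ^ (j + 1) * sPoly (m + 1) - ((m + 1 : ℚ) ^ 2) • (X ^ j * sPoly m) := by
      rw [sPoly, smul_eq_C_mul]
      ring
    have hpath := pathWeight_succ j (m + 1)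
    rw [Nat.add_sub_cancel] at hpath
    rw [hrec, map_sub, map_smul, ih₁, ih₀, hpath, Nat.factorial_succ (m + 1),
      Nat.factorial_succ m, Rat.smul_def]
    push_cast
    ring

lemma map_sPoly_mul_sPoly_of_lt {m k : ℕ} (h : k < m) : L (sPoly m * sPoly k) = 0 := by
  rw [as_sum_range' (sPoly k) m ((natDegree_sPoly_le k).trans_lt h), Finset.mul_sum, map_sum]
  refine Finset.sum_eq_zero fun j hj => ?_
  rw [← C_mul_X_pow_eq_monomial, ← smul_eq_C_mul, mul_smul_comm, mul_comm, map_smul,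
    map_X_pow_mul_sPoly L hL, pathWeight_eq_zero_of_lt (Finset.mem_range.mp hj)]
  simp

end PathMoments

/-- The `s_m` form an orthogonal polynomial sequence for the moment sequence `|E_n|`:
for `m ≠ k` we have `L(s_m · s_k) = 0`. -/
theorem sPoly_orthogonal (m k : ℕ) (h : m ≠ k) : momentL (sPoly m * sPoly k) = 0 := by
  have hL := momentL_X_pow
  rw [momentL_eq_lsum] at hL ⊢
  rcases h.lt_or_gt with hmk | hkm
  · rw [mul_comm]
    exact map_sPoly_mul_sPoly_of_lt _ hL hmk
  · exact map_sPoly_mul_sPoly_of_lt _ hL hkm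
end

section
/- For g = 0 and n = 2m+1 ≥ 3, the expression P_{0,n}(t) = [(1+t²)^n − 2^{n−1} t^{n−1}(1+t²)] / [(1−t²)(1−t⁴)] is a polynomial in t with nonnegative integer coefficients, of degree 2n−6, whose coefficients are symmetric (palindromic): the coefficient of t^d equals that of t^{2n−6−d}. -/
/-!
With `a = (1 + t²)²` and `b = 4t²` one has `a - b = (1 - t²)²`, so the numerator is
`(1 + t²)(aᵐ - bᵐ) = (1 + t²)(1 - t²)² ∑_{i<m} aⁱ bᵐ⁻¹⁻ⁱ = (1 - t²)(1 - t⁴) ∑_{i<m} aⁱ bᵐ⁻¹⁻ⁱ`.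
The quotient is thus a sum of products of polynomials with nonnegative coefficients. Both `a` and
`b` are palindromic of degree `4`, hence every summand is palindromic of degree `4(m - 1)`, and so
is the sum; its constant term is `1`, so by palindromicity its degree is exactly `4(m - 1)`.
-/

open Polynomial Finset

namespace Polynomial

/-- The degree bound is not implied by the other condition: `reflect N` fixes every monomial of
degree above `N`. -/
def IsPalindromic {R : Type*} [Semiring R] (N : ℕ) (p : R[X]) : Prop :=
  p.natDegree ≤ N ∧ reflect N p = p

namespace IsPalindromic

section Semiring

variable {R : Type*} [Semiring R] {N : ℕ} {p q : R[X]}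

theorem coeff_eq (h : IsPalindromic N p) {d : ℕ} (hd : d ≤ N) : p.coeff d = p.coeff (N - d) := by
  conv_lhs => rw [← h.2, coeff_reflect, revAt_le hd]

theorem natDegree_eq (h : IsPalindromic N p) (h0 : p.coeff 0 ≠ 0) : p.natDegree = N := by
  refine le_antisymm h.1 (le_natDegree_of_ne_zero ?_)
  rwa [← Nat.sub_zero N, ← h.coeff_eq (Nat.zero_le N)]

theorem zero : IsPalindromic N (0 : R[X]) :=
  ⟨by simp, reflect_zero⟩

theorem add (hp : IsPalindromic N p) (hq : IsPalindromic N q) : IsPalindromic N (p + q) :=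
  ⟨natDegree_add_le_of_degree_le hp.1 hq.1, by rw [reflect_add, hp.2, hq.2]⟩

theorem sum {ι : Type*} {s : Finset ι} {f : ι → R[X]} (h : ∀ i ∈ s, IsPalindromic N (f i)) :
    IsPalindromic N (∑ i ∈ s, f i) :=
  Finset.sum_induction f (IsPalindromic N) (fun _ _ ↦ add) zero h

theorem C_mul_X_pow (c : R) (n : ℕ) : IsPalindromic (2 * n) (C c * X ^ n) := by
  refine ⟨natDegree_C_mul_X_pow_le c n |>.trans (by omega), ?_⟩
  rw [reflect_C_mul_X_pow, revAt_le (by omega), show 2 * n - n = n by omega]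

theorem one_add_X_sq : IsPalindromic 2 (1 + X ^ 2 : R[X]) := by
  refine ⟨natDegree_add_le_of_degree_le (by simp) (natDegree_X_pow_le 2), ?_⟩
  rw [reflect_add, reflect_one, reflect_monomial, revAt_le le_rfl, Nat.sub_self, pow_zero,
    add_comm]

end Semiring

section CommSemiring

variable {R : Type*} [CommSemiring R] {N M : ℕ} {p q : R[X]}

theorem mul (hp : IsPalindromic N p) (hq : IsPalindromic M q) :
    IsPalindromic (N + M) (p * q) :=
  ⟨natDegree_mul_le.trans (Nat.add_le_add hp.1 hq.1), by rw [reflect_mul p q hp.1 hq.1, hp.2, hq.2]⟩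

theorem one : IsPalindromic 0 (1 : R[X]) :=
  ⟨by simp, by rw [reflect_one, pow_zero]⟩

theorem pow (hp : IsPalindromic N p) (k : ℕ) : IsPalindromic (k * N) (p ^ k) := by
  induction k with
  | zero => simpa using one
  | succ k ih => simpa [pow_succ, add_mul] using ih.mul hp

end CommSemiring

end IsPalindromic

end Polynomial

/-- The Poincaré polynomial `P_{0,2m+1}`. -/
noncomputable def genusZeroPoly (R : Type*) [CommSemiring R] (m : ℕ) : R[X] :=
  ∑ i ∈ range m, ((1 + X ^ 2) ^ 2) ^ i * (4 * X ^ 2) ^ (m - 1 - i)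

section genusZeroPoly

variable (R : Type*)

theorem numerator_eq_genusZeroPoly_mul [CommRing R] (m : ℕ) :
    (1 + X ^ 2 : R[X]) ^ (2 * m + 1) - 2 ^ (2 * m) * X ^ (2 * m) * (1 + X ^ 2) =
      genusZeroPoly R m * ((1 - X ^ 2) * (1 - X ^ 4)) := by
  have hgeom := geom_sum₂_mul ((1 + X ^ 2 : R[X]) ^ 2) (4 * X ^ 2) m
  have hpow : (1 + X ^ 2 : R[X]) ^ (2 * m + 1) = ((1 + X ^ 2) ^ 2) ^ m * (1 + X ^ 2) := by
    rw [← pow_mul, ← pow_succ]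
  have hb : (2 : R[X]) ^ (2 * m) * X ^ (2 * m) = (4 * X ^ 2) ^ m := by
    rw [mul_pow, pow_mul, pow_mul]
    norm_num
  rw [hpow, hb, genusZeroPoly]
  linear_combination (-(1 + X ^ 2) : R[X]) * hgeom

theorem genusZeroPoly_int_eq_map (m : ℕ) :
    genusZeroPoly ℤ m = (genusZeroPoly ℕ m).map (Nat.castRingHom ℤ) := by
  simp [genusZeroPoly, Polynomial.map_sum]

theorem isPalindromic_genusZeroPoly [CommSemiring R] (m : ℕ) :
    IsPalindromic (4 * (m - 1)) (genusZeroPoly R m) := by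
  have ha : IsPalindromic 4 ((1 + X ^ 2 : R[X]) ^ 2) := IsPalindromic.one_add_X_sq.pow 2
  have hb : IsPalindromic 4 (4 * X ^ 2 : R[X]) := by
    simpa only [map_ofNat] using IsPalindromic.C_mul_X_pow (4 : R) 2
  refine IsPalindromic.sum fun i hi ↦ ?_
  have hi : i < m := mem_range.mp hi
  rw [show 4 * (m - 1) = i * 4 + (m - 1 - i) * 4 by omega]
  exact (ha.pow i).mul (hb.pow (m - 1 - i))

theorem coeff_zero_genusZeroPoly [CommSemiring R] {m : ℕ} (hm : 1 ≤ m) :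
    (genusZeroPoly R m).coeff 0 = 1 := by
  obtain ⟨k, rfl⟩ := Nat.exists_eq_add_of_le' hm
  have hlow : ∀ i ∈ range k, (0 : R) ^ (k - i) = 0 := fun i hi ↦
    zero_pow (Nat.sub_ne_zero_of_lt (mem_range.mp hi))
  simp [genusZeroPoly, coeff_zero_eq_eval_zero, eval_finsetSum, sum_range_succ, sum_eq_zero hlow]

end genusZeroPoly

/-- For `n = 2m+1 ≥ 3`, the expression
`P_{0,n}(t) = [(1+t²)^n − 2^{n−1} t^{n−1}(1+t²)] / [(1−t²)(1−t⁴)]`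
is a polynomial with nonnegative integer coefficients, of degree `2n−6`, whose
coefficients are palindromic. -/
theorem Ppoly_genus_zero_palindromic (m : ℕ) (hm : 1 ≤ m) :
    ∃ p : Polynomial ℤ,
      (1 + X ^ 2) ^ (2 * m + 1) - 2 ^ (2 * m) * X ^ (2 * m) * (1 + X ^ 2) =
        p * ((1 - X ^ 2) * (1 - X ^ 4)) ∧
      p.natDegree = 2 * (2 * m + 1) - 6 ∧
      (∀ d, 0 ≤ p.coeff d) ∧
      (∀ d ≤ 2 * (2 * m + 1) - 6, p.coeff d = p.coeff (2 * (2 * m + 1) - 6 - d)) := by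
  have hN : 2 * (2 * m + 1) - 6 = 4 * (m - 1) := by omega
  have hpal := isPalindromic_genusZeroPoly ℤ m
  refine ⟨genusZeroPoly ℤ m, numerator_eq_genusZeroPoly_mul ℤ m, ?_, fun d ↦ ?_, fun d hd ↦ ?_⟩
  · rw [hN]
    exact hpal.natDegree_eq (by simp [coeff_zero_genusZeroPoly ℤ hm])
  · rw [genusZeroPoly_int_eq_map, coeff_map]
    exact Int.natCast_nonneg _
  · rw [hN] at hd ⊢
    exact hpal.coeff_eq hd
end

section
/- Let L: ℚ[x] → ℚ be the linear functional with L(x^n) = |E_n| (absolute Euler numbers). Let s_m(x) be defined by s_0 = 1, s_1 = x, s_{m+1} = x s_m − m² s_{m−1}. Then L(s_m(x)·x^k) = 0 for all 0 ≤ k < m. -/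
/-!
Write `D_a q = (1 + aX²) q' + aXq` (`secDeriv a`). Since
`(sech · q ∘ tanh)' = sech · (D_{-1} q) ∘ tanh`, we get `E_n = (D_{-1}ⁿ 1)(0)`. The
substitution `X ↦ tX` turns `D_a` into `D_{at²}` up to a factor `t`; taking `t = i`, and using
that `D_1ⁿ 1` has nonnegative coefficients, `|E_n| = (D_1ⁿ 1)(0)` (the `n`-th derivative of
`sec` at `0`). Hence `L(p) = (p(D_1) 1)(0)`. As `D_1 (X^(n+1)) = (n+1) X^n + (n+2) X^(n+2)`,
the three-term recurrence gives `s_m(D_1) 1 = m! X^m`, and since `D_a` lowers the order of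
vanishing at `0` by at most one, `L(s_m x^k) = (D_1^k (m! X^m))(0) = 0` for `k < m`.
-/

open Polynomial
open scoped Nat

namespace Polynomial

section CommSemiring

variable {R S : Type*} [CommSemiring R] [CommSemiring S]

noncomputable def secDeriv (a : R) : Module.End R R[X] :=
  LinearMap.mulLeft R (1 + C a * X ^ 2) ∘ₗ derivative + LinearMap.mulLeft R (C a * X)

theorem secDeriv_apply (a : R) (q : R[X]) :
    secDeriv a q = (1 + C a * X ^ 2) * derivative q + C a * X * q := rfl

theorem secDeriv_X_pow_succ (a : R) (n : ℕ) :
    secDeriv a (X ^ (n + 1)) = C (n + 1 : R) * X ^ n + C (a * (n + 2)) * X ^ (n + 2) := by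
  rw [secDeriv_apply, derivative_X_pow]
  simp only [map_add, map_mul, map_natCast, map_ofNat, C_1, Nat.cast_add, Nat.cast_one,
    add_tsub_cancel_right]
  ring

theorem X_pow_dvd_secDeriv {n : ℕ} {q : R[X]} (a : R) (h : X ^ (n + 1) ∣ q) :
    X ^ n ∣ secDeriv a q := by
  obtain ⟨r, rfl⟩ := h
  rw [secDeriv_apply, derivative_mul, derivative_X_pow]
  exact Dvd.intro
    ((1 + C a * X ^ 2) * (C (↑(n + 1) : R) * r + X * derivative r) + C a * X ^ 2 * r)
    (by simp only [add_tsub_cancel_right]; ring)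

theorem X_pow_dvd_secDeriv_pow {n k : ℕ} {q : R[X]} (a : R) (h : X ^ (n + k) ∣ q) :
    X ^ n ∣ (secDeriv a ^ k) q := by
  induction k generalizing n with
  | zero => simpa using h
  | succ k ih =>
    rw [pow_succ', Module.End.mul_apply]
    exact X_pow_dvd_secDeriv a (ih (by rwa [add_right_comm, add_assoc]))

theorem map_secDeriv (f : R →+* S) (a : R) (q : R[X]) :
    (secDeriv a q).map f = secDeriv (f a) (q.map f) := by
  simp [secDeriv_apply, Polynomial.map_mul, derivative_map]

theorem map_secDeriv_pow (f : R →+* S) (a : R) (n : ℕ) (q : R[X]) :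
    ((secDeriv a ^ n) q).map f = (secDeriv (f a) ^ n) (q.map f) := by
  induction n with
  | zero => rfl
  | succ n ih =>
    rw [pow_succ', Module.End.mul_apply, map_secDeriv, ih, ← Module.End.mul_apply, ← pow_succ']

theorem C_mul_secDeriv_comp (a t : R) (q : R[X]) :
    C t * (secDeriv a q).comp (C t * X) = secDeriv (a * t ^ 2) (q.comp (C t * X)) := by
  simp only [secDeriv_apply, derivative_comp, derivative_C_mul_X, mul_comp, add_comp, one_comp,
    C_comp, pow_comp, X_comp, map_mul, map_pow]
  ring

theorem C_pow_mul_secDeriv_pow_comp (a t : R) (n : ℕ) (q : R[X]) :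
    C (t ^ n) * ((secDeriv a ^ n) q).comp (C t * X) =
      (secDeriv (a * t ^ 2) ^ n) (q.comp (C t * X)) := by
  induction n with
  | zero => simp
  | succ n ih =>
    rw [pow_succ' (secDeriv (a * t ^ 2)), Module.End.mul_apply, ← ih, ← smul_eq_C_mul (t ^ n),
      map_smul, smul_eq_C_mul, ← C_mul_secDeriv_comp, pow_succ' (secDeriv a),
      Module.End.mul_apply, pow_succ', map_mul, mul_assoc, mul_left_comm]

theorem eval_zero_secDeriv_pow_one_map (f : R →+* S) (a : R) (n : ℕ) :
    f (((secDeriv a ^ n) 1).eval 0) = ((secDeriv (f a) ^ n) 1).eval 0 := by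
  rw [← eval_zero_map, map_secDeriv_pow, Polynomial.map_one]

theorem pow_mul_eval_zero_secDeriv_pow_one (a t : R) (n : ℕ) :
    t ^ n * ((secDeriv a ^ n) 1).eval 0 = ((secDeriv (a * t ^ 2) ^ n) 1).eval 0 := by
  simpa using congrArg (eval 0) (C_pow_mul_secDeriv_pow_comp a t n 1)

end CommSemiring

section OrderedSemiring

variable {R : Type*} [CommSemiring R] [PartialOrder R] [IsOrderedRing R]

theorem coeff_secDeriv_nonneg {a : R} (ha : 0 ≤ a) {q : R[X]} (hq : ∀ j, 0 ≤ q.coeff j)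
    (j : ℕ) : 0 ≤ (secDeriv a q).coeff j := by
  have h : secDeriv a q = derivative q + C a * (derivative q * X ^ 2 + q * X ^ 1) := by
    rw [secDeriv_apply]; ring
  have hd : ∀ i, 0 ≤ (derivative q).coeff i := fun i => by
    rw [coeff_derivative]; exact mul_nonneg (hq _) (add_nonneg (Nat.cast_nonneg _) zero_le_one)
  rw [h, coeff_add, coeff_C_mul, coeff_add, coeff_mul_X_pow', coeff_mul_X_pow']
  refine add_nonneg (hd j) (mul_nonneg ha (add_nonneg ?_ ?_)) <;> split_ifs
  exacts [hd _, le_rfl, hq _, le_rfl]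

theorem coeff_secDeriv_pow_one_nonneg {a : R} (ha : 0 ≤ a) (n j : ℕ) :
    0 ≤ ((secDeriv a ^ n) 1).coeff j := by
  induction n generalizing j with
  | zero => rw [pow_zero, Module.End.one_apply, coeff_one]; split_ifs <;> simp
  | succ n ih => rw [pow_succ', Module.End.mul_apply]; exact coeff_secDeriv_nonneg ha ih j

end OrderedSemiring

end Polynomial

namespace Real

theorem hasDerivAt_tanh (x : ℝ) : HasDerivAt tanh (cosh x ^ 2)⁻¹ x := by
  have hc : cosh x ≠ 0 := (cosh_pos x).ne'
  have h := (hasDerivAt_sinh x).div (hasDerivAt_cosh x) hc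
  rw [show sinh / cosh = tanh from funext fun y => (tanh_eq_sinh_div_cosh y).symm] at h
  refine h.congr_deriv ?_
  field_simp
  linear_combination cosh_sq_sub_sinh_sq x

theorem hasDerivAt_inv_cosh_mul_eval_tanh (q : ℝ[X]) (x : ℝ) :
    HasDerivAt (fun y => (cosh y)⁻¹ * q.eval (tanh y))
      ((cosh x)⁻¹ * (secDeriv (-1) q).eval (tanh x)) x := by
  have hc : cosh x ≠ 0 := (cosh_pos x).ne'
  refine (((hasDerivAt_cosh x).inv hc).mul
    ((q.hasDerivAt _).comp x (hasDerivAt_tanh x))).congr_deriv ?_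
  simp only [secDeriv_apply, eval_add, eval_mul, eval_one, eval_C, eval_pow, eval_X,
    Function.comp_apply, Pi.inv_apply, tanh_eq_sinh_div_cosh]
  field_simp
  linear_combination -(eval (sinh x / cosh x) (derivative q)) * cosh_sq_sub_sinh_sq x

theorem iteratedDeriv_inv_cosh_mul_eval_tanh (n : ℕ) (q : ℝ[X]) :
    iteratedDeriv n (fun y => (cosh y)⁻¹ * q.eval (tanh y)) =
      fun y => (cosh y)⁻¹ * ((secDeriv (-1) ^ n) q).eval (tanh y) := by
  induction n generalizing q with
  | zero => rfl
  | succ n ih =>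
    rw [iteratedDeriv_succ', funext fun y => (hasDerivAt_inv_cosh_mul_eval_tanh q y).deriv, ih,
      pow_succ, Module.End.mul_apply]

end Real

theorem eulerNumber_eq_eval (n : ℕ) : eulerNumber n = ((secDeriv (-1) ^ n) 1).eval 0 := by
  simpa [eulerNumber] using congrFun (Real.iteratedDeriv_inv_cosh_mul_eval_tanh n 1) 0

theorem abs_eulerNumber_s17 (n : ℕ) :
    |eulerNumber n| = ((((secDeriv (1 : ℚ) ^ n) 1).eval 0 : ℚ) : ℝ) := by
  set p := (secDeriv (1 : ℚ) ^ n) 1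
  have hp : 0 ≤ p.eval 0 := by
    rw [← coeff_zero_eq_eval_zero]; exact coeff_secDeriv_pow_one_nonneg zero_le_one n 0
  have hsubst : Complex.I ^ n * (eulerNumber n : ℂ) = ((p.eval 0 : ℚ) : ℂ) := by
    have hR := eval_zero_secDeriv_pow_one_map Complex.ofRealHom (-1) n
    have hQ := eval_zero_secDeriv_pow_one_map (Rat.castHom ℂ) 1 n
    rw [eulerNumber_eq_eval]
    simp only [Complex.ofRealHom_eq_coe, map_neg, map_one, eq_ratCast] at hR hQ
    rw [hR, hQ, pow_mul_eval_zero_secDeriv_pow_one, Complex.I_sq, neg_one_mul, neg_neg]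
  calc |eulerNumber n| = ‖Complex.I ^ n * (eulerNumber n : ℂ)‖ := by simp
    _ = ((p.eval 0 : ℚ) : ℝ) := by
      rw [hsubst, Complex.norm_ratCast]; exact abs_of_nonneg (by exact_mod_cast hp)

theorem momentL_eq_eval_aeval_secDeriv (p : ℚ[X]) :
    momentL p = (((aeval (secDeriv (1 : ℚ)) p 1).eval 0 : ℚ) : ℝ) := by
  simp [momentL, aeval_def, eval₂_eq_sum, Polynomial.sum_def, LinearMap.sum_apply, eval_finsetSum,
    abs_eulerNumber_s17]

theorem aeval_secDeriv_sPoly : ∀ m, aeval (secDeriv (1 : ℚ)) (sPoly m) 1 = C (m ! : ℚ) * X ^ m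
  | 0 => by simp [sPoly]
  | 1 => by simp [sPoly, secDeriv_apply]
  | m + 2 => by
    rw [sPoly, map_sub, map_mul, map_mul, aeval_X, aeval_C, LinearMap.sub_apply,
      Module.End.mul_apply, Module.End.mul_apply, aeval_secDeriv_sPoly (m + 1),
      aeval_secDeriv_sPoly m, Module.algebraMap_end_apply, ← smul_eq_C_mul ((m + 1)! : ℚ),
      map_smul, secDeriv_X_pow_succ]
    simp only [smul_eq_C_mul, Nat.factorial_succ, Nat.cast_mul, Nat.cast_add, Nat.cast_one, map_mul,
      map_add, map_natCast, map_one, map_ofNat, map_pow, one_mul]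
    ring

/-- `L(s_m(x)·x^k) = 0` for all `0 ≤ k < m`. -/
theorem sPoly_orthogonal_monomials (m k : ℕ) (hk : k < m) :
    momentL (sPoly m * Polynomial.X ^ k) = 0 := by
  have hdvd : X ^ 1 ∣ (secDeriv (1 : ℚ) ^ k) (C (m ! : ℚ) * X ^ m) :=
    X_pow_dvd_secDeriv_pow 1 (dvd_mul_of_dvd_right (pow_dvd_pow X (show 1 + k ≤ m by omega)) _)
  rw [momentL_eq_eval_aeval_secDeriv, mul_comm, map_mul, aeval_X_pow, Module.End.mul_apply,
    aeval_secDeriv_sPoly, ← coeff_zero_eq_eval_zero,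
    X_dvd_iff.mp ((dvd_pow_self X one_ne_zero).trans hdvd), Rat.cast_zero]
end
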